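/- arXiv:1412.4814 — 4 statements merged into one kernel-verified Lean document; each statement's English description precedes it below -/
import Mathlib

section
/- Let G be a compact connected topological group with normalized Haar measure μ, A ⊆ G measurable, and k ≥ 2 an integer. Then there exist g₁, …, g_k ∈ G such that μ(⋂_{i=1}^k A g_i) = μ(A)^k. -/
/-!
For measurable `B`, the measure `t ↦ ∫ μ(t ∩ A g⁻¹) dμ(g)` is finite and right-invariant, hence
equal to `μ(A) • μ` by uniqueness of Haar measure; so the average of `μ(B ∩ A g⁻¹)` over `g` is
`μ(A) μ(B)`. Adding one translate at a time, we find `g` with `μ(⋂ A gᵢ⁻¹) ≤ μ(A)^k`, while all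
`gᵢ = 1` give `μ(A) ≥ μ(A)^k`. Translation is continuous for the metric `μ(s ∆ t)` on measurable
sets, so `g ↦ μ(⋂ A gᵢ⁻¹)` is continuous on the connected space `Gᵏ`, and the intermediate value
theorem gives equality.
-/

open MeasureTheory Set
open scoped ENNReal symmDiff

namespace MeasureTheory.MeasuredSets

variable {α ι : Type*} [MeasurableSpace α] {μ : Measure α}

def iInter [Countable ι] (s : ι → MeasuredSets μ) : MeasuredSets μ :=
  ⟨⋂ i, (s i : Set α), .iInter fun i => (s i).2⟩

theorem edist_iInter_le [Fintype ι] (s t : ι → MeasuredSets μ) :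
    edist (iInter s) (iInter t) ≤ ∑ i, edist (s i) (t i) := by
  have hsub : (⋂ i, (s i : Set α)) ∆ (⋂ i, (t i : Set α)) ⊆ ⋃ i, (s i : Set α) ∆ (t i) := by
    intro x
    simp only [mem_symmDiff, mem_iInter, mem_iUnion, not_forall]
    grind
  exact (measure_mono hsub).trans (measure_iUnion_fintype_le μ _)

theorem lipschitzWith_iInter [Fintype ι] :
    LipschitzWith (Fintype.card ι) (iInter : (ι → MeasuredSets μ) → MeasuredSets μ) := by
  intro s t
  calc edist (iInter s) (iInter t) ≤ ∑ i, edist (s i) (t i) := edist_iInter_le s t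
    _ ≤ Fintype.card ι • edist s t :=
      Finset.sum_le_card_nsmul _ _ _ fun i _ => edist_le_pi_edist s t i
    _ = _ := by simp [nsmul_eq_mul]

theorem continuous_measure_iInter [Fintype ι] :
    Continuous fun s : ι → MeasuredSets μ => μ (⋂ i, (s i : Set α)) :=
  continuous_measure.comp lipschitzWith_iInter.continuous

end MeasureTheory.MeasuredSets

namespace MeasureTheory.Measure

variable {G : Type*} [Group G] [TopologicalSpace G] [IsTopologicalGroup G] [CompactSpace G]
  [MeasurableSpace G] [BorelSpace G] (μ : Measure G) [μ.IsHaarMeasure] [IsProbabilityMeasure μ]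

theorem eq_measure_univ_smul_of_isMulLeftInvariant (ν : Measure G) [ν.IsMulLeftInvariant]
    [IsFiniteMeasure ν] : ν = ν univ • μ := by
  have hν := isMulInvariant_eq_smul_of_compactSpace ν μ
  have huniv : (haarScalarFactor ν μ : ℝ≥0∞) = ν univ := by
    conv_rhs => rw [hν]
    simp
  rwa [← huniv, ← ENNReal.smul_def]

instance isMulRightInvariant_of_isProbabilityMeasure : μ.IsMulRightInvariant :=
  ⟨fun g =>
    have := isProbabilityMeasure_map (μ := μ) (measurable_mul_const g).aemeasurable
    isHaarMeasure_eq_of_isProbabilityMeasure _ μ⟩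

instance isInvInvariant_of_isProbabilityMeasure : μ.IsInvInvariant := by
  refine ⟨(eq_measure_univ_smul_of_isMulLeftInvariant μ μ.inv).trans ?_⟩
  simp [inv_apply]

theorem eq_measure_univ_smul_of_isMulRightInvariant (ν : Measure G) [ν.IsMulRightInvariant]
    [IsFiniteMeasure ν] : ν = ν univ • μ := by
  ext s -
  rw [← ν.inv_inv, inv_apply, eq_measure_univ_smul_of_isMulLeftInvariant μ ν.inv]
  simp [inv_apply, measure_inv]

end MeasureTheory.Measure

namespace MeasureTheory

variable {G : Type*} [Group G] [TopologicalSpace G] [IsTopologicalGroup G] [CompactSpace G]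
  [MeasurableSpace G] [BorelSpace G] {μ : Measure G} [μ.IsHaarMeasure] [IsProbabilityMeasure μ]
  {A : Set G}

def MeasuredSets.preimageMulRight (s : MeasuredSets μ) (g : G) : MeasuredSets μ :=
  ⟨(· * g) ⁻¹' s, s.2.preimage (measurable_mul_const g)⟩

theorem MeasuredSets.continuous_preimageMulRight (s : MeasuredSets μ) :
    Continuous s.preimageMulRight := by
  let mulRight : C(G × G, G) := ⟨fun p => p.2 * p.1, by fun_prop⟩
  refine continuous_iff_continuousAt.2 fun g => tendsto_iff_edist_tendsto_0.2 ?_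
  have := tendsto_measure_symmDiff_preimage_nhds_zero (mulRight.curry.continuous.tendsto g)
    (.of_forall (measurePreserving_mul_right μ)) (measurePreserving_mul_right μ g)
    s.2.nullMeasurableSet (measure_ne_top μ s)
  exact this

theorem continuous_measure_inter_preimage_mul_right {s : Set G} (hs : MeasurableSet s)
    (hA : MeasurableSet A) : Continuous fun g : G => μ (s ∩ (· * g) ⁻¹' A) := by
  let s' : MeasuredSets μ := ⟨s, hs⟩
  let A' : MeasuredSets μ := ⟨A, hA⟩
  refine (MeasuredSets.continuous_measure_iInter.comp (continuous_pi fun b => ?_)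
    (f := fun g b => cond b s' (A'.preimageMulRight g))).congr fun g => ?_
  · cases b
    exacts [A'.continuous_preimageMulRight, continuous_const]
  · simp only [Function.comp_apply, inter_eq_iInter, Bool.apply_cond]
    rfl

theorem continuous_measure_iInter_preimage_mul_right {ι : Type*} [Fintype ι]
    (hA : MeasurableSet A) : Continuous fun g : ι → G => μ (⋂ i, (· * g i) ⁻¹' A) :=
  let A' : MeasuredSets μ := ⟨A, hA⟩
  MeasuredSets.continuous_measure_iInter.comp <|
    continuous_pi fun i => A'.continuous_preimageMulRight.comp (continuous_apply i)

theorem lintegral_measure_inter_preimage_mul_right (hA : MeasurableSet A) {s : Set G}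
    (hs : MeasurableSet s) : ∫⁻ g, μ (s ∩ (· * g) ⁻¹' A) ∂μ = μ A * μ s := by
  set ρ := μ.bind fun g => μ.restrict ((· * g) ⁻¹' A)
  have hρ : ∀ t, MeasurableSet t → ρ t = ∫⁻ g, μ (t ∩ (· * g) ⁻¹' A) ∂μ := fun t ht => by
    refine (Measure.bind_apply ht (Measurable.aemeasurable ?_)).trans ?_
    · refine Measure.measurable_of_measurable_coe _ fun t ht => ?_
      simpa only [Measure.restrict_apply ht] using
        (continuous_measure_inter_preimage_mul_right ht hA).measurable
    · simp only [Measure.restrict_apply ht]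
  have hρ_univ : ρ univ = μ A := by
    simp [hρ univ .univ, measure_preimage_mul_right]
  have : IsFiniteMeasure ρ := ⟨by simp [hρ_univ, measure_lt_top]⟩
  have : ρ.IsMulRightInvariant := by
    refine ⟨fun h => Measure.ext fun t ht => ?_⟩
    have hmul := measurable_mul_const h
    rw [Measure.map_apply hmul ht, hρ _ (hmul ht), hρ t ht]
    calc ∫⁻ g, μ ((· * h) ⁻¹' t ∩ (· * g) ⁻¹' A) ∂μ
        = ∫⁻ g, μ (t ∩ (· * (h⁻¹ * g)) ⁻¹' A) ∂μ := by
          refine lintegral_congr fun g => ?_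
          rw [← measure_preimage_mul_right μ h (t ∩ _)]
          simp [preimage_preimage, mul_assoc]
      _ = ∫⁻ g, μ (t ∩ (· * g) ⁻¹' A) ∂μ :=
          lintegral_mul_left_eq_self (fun g => μ (t ∩ (· * g) ⁻¹' A)) h⁻¹
  rw [← hρ s hs, Measure.eq_measure_univ_smul_of_isMulRightInvariant μ ρ, hρ_univ]
  rfl

theorem exists_measure_iInter_preimage_mul_right_le (hA : MeasurableSet A) (k : ℕ) :
    ∃ g : Fin k → G, μ (⋂ i, (· * g i) ⁻¹' A) ≤ μ A ^ k := by
  induction k with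
  | zero => exact ⟨Fin.elim0, by simp⟩
  | succ k ih =>
    obtain ⟨g, hg⟩ := ih
    set B := ⋂ i, (· * g i) ⁻¹' A
    have hB : MeasurableSet B := .iInter fun i => hA.preimage (measurable_mul_const (g i))
    obtain ⟨h, hh⟩ := exists_le_lintegral (μ := μ) (f := fun h => μ (B ∩ (· * h) ⁻¹' A))
      (continuous_measure_inter_preimage_mul_right hB hA).measurable.aemeasurable
    refine ⟨Fin.cons h g, ?_⟩
    have hcons : ⋂ i, (· * (Fin.cons h g : Fin (k + 1) → G) i) ⁻¹' A = B ∩ (· * h) ⁻¹' A := by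
      ext x
      simp [Fin.forall_fin_succ, B, and_comm]
    calc μ (⋂ i, (· * (Fin.cons h g : Fin (k + 1) → G) i) ⁻¹' A)
        = μ (B ∩ (· * h) ⁻¹' A) := by rw [hcons]
      _ ≤ μ A * μ B := hh.trans (lintegral_measure_inter_preimage_mul_right hA hB).le
      _ ≤ μ A * μ A ^ k := by gcongr
      _ = μ A ^ (k + 1) := (pow_succ' _ _).symm

end MeasureTheory

theorem exists_translates_inter_eq_pow_general {G : Type*} [Group G] [TopologicalSpace G]
    [IsTopologicalGroup G] [CompactSpace G] [ConnectedSpace G]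
    [MeasurableSpace G] [BorelSpace G]
    (μ : Measure G) [μ.IsHaarMeasure] [IsProbabilityMeasure μ]
    (A : Set G) (hA : MeasurableSet A) (k : ℕ) :
    ∃ g : Fin k → G, μ (⋂ i, (fun a => a * g i) '' A) = (μ A) ^ k := by
  obtain ⟨low, h_low⟩ := exists_measure_iInter_preimage_mul_right_le (μ := μ) hA k
  have h_one : μ A ^ k ≤ μ (⋂ _ : Fin k, (· * (1 : G)) ⁻¹' A) := by
    rcases k.eq_zero_or_pos with rfl | hk
    · simp
    · have : Nonempty (Fin k) := ⟨⟨0, hk⟩⟩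
      simpa [iInter_const] using pow_le_of_le_one zero_le (prob_le_one (μ := μ)) hk.ne'
  obtain ⟨g, hg⟩ := intermediate_value_univ₂ (continuous_measure_iInter_preimage_mul_right hA)
    continuous_const h_low h_one
  exact ⟨fun i => (g i)⁻¹, by simpa only [image_mul_right, inv_inv] using hg⟩

theorem exists_translates_inter_eq_pow {G : Type*} [Group G] [TopologicalSpace G]
    [IsTopologicalGroup G] [CompactSpace G] [ConnectedSpace G]
    [MeasurableSpace G] [BorelSpace G]
    (μ : Measure G) [μ.IsHaarMeasure] [IsProbabilityMeasure μ]
    (A : Set G) (hA : MeasurableSet A) (k : ℕ) (hk : 2 ≤ k) :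
    ∃ g : Fin k → G, μ (⋂ i, (fun a => a * g i) '' A) = (μ A) ^ k :=
  exists_translates_inter_eq_pow_general μ A hA k
end

section
/- Let λ be a Borel probability measure on Aut(X,μ), let ρ = ρ⁺(λ), let κ > ρ, and write λ = κλ₁ + (1−κ)λ₂ with λ₁, λ₂ Borel probability measures on Aut(X,μ). Then every λ₁-invariant measurable set Y of positive measure satisfies μ(Y) ≥ (κ−ρ)/(1−ρ). -/
/-!
Write `m = μ Y`. Since `Y` is `P₁`-invariant, only the `P₂`-part of `P` moves `Y`, so the expected
overlap `∫ μ (a⁻¹ Y ∩ Y) dP = m - e_P(Y)` is at least `κ m`. Testing `ρ⁺` against `1_Y - m`, whose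
correlations are `μ (a⁻¹ Y ∩ Y) - m²` and whose variance is `m - m²`, bounds the same overlap by
`m² + ρ (m - m²)`. Comparing the two and dividing by `m > 0` gives `κ - ρ ≤ m (1 - ρ)`.
-/

open MeasureTheory
open scoped ENNReal

/-- The expected boundary measure `e_λ(Y) = ∫ μ(Ya \ Y) dλ(a)`. -/
noncomputable def expBoundary {X Ω : Type*} [MeasurableSpace X] [MeasurableSpace Ω]
    (μ : Measure X) (P : Measure Ω) (a : Ω → X ≃ᵐ X) (Y : Set X) : ℝ≥0∞ :=
  ∫⁻ ω, μ ((a ω) '' Y \ Y) ∂P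

/-- `ρ⁺(λ)`: top of the spectrum of the averaging operator on `L²₀`. -/
noncomputable def rhoPlus {X Ω : Type*} [MeasurableSpace X] [MeasurableSpace Ω]
    (μ : Measure X) (P : Measure Ω) (a : Ω → X ≃ᵐ X) : ℝ :=
  sSup { r : ℝ | ∃ f : X → ℝ, MemLp f 2 μ ∧ (∫ x, f x ∂μ) = 0 ∧
    (∫ x, f x ^ 2 ∂μ) ≠ 0 ∧
    r = (∫ ω, (∫ x, f ((a ω) x) * f x ∂μ) ∂P) / (∫ x, f x ^ 2 ∂μ) }

open Set

section Indicator

variable {X : Type*} [MeasurableSpace X] {μ : Measure X} [IsProbabilityMeasure μ]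

lemma integral_indicator_one_sub_mul_indicator_one_sub {A B : Set X} (hA : MeasurableSet A)
    (hB : MeasurableSet B) (s t : ℝ) :
    ∫ x, (A.indicator 1 x - s) * (B.indicator 1 x - t) ∂μ
      = μ.real (A ∩ B) - t * μ.real A - s * μ.real B + s * t := by
  have hexpand : ∀ x, (A.indicator 1 x - s) * (B.indicator 1 x - t)
      = (A ∩ B).indicator 1 x - t * A.indicator 1 x - s * B.indicator 1 x + s * t := by
    intro x
    rw [inter_indicator_one, Pi.mul_apply]
    ring
  have hint : ∀ {C : Set X}, MeasurableSet C → Integrable (C.indicator (1 : X → ℝ)) μ :=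
    fun hC => (integrable_const (1 : ℝ)).indicator hC
  simp_rw [hexpand]
  rw [integral_add ?_ (integrable_const _), integral_sub ?_ ((hint hB).const_mul s),
    integral_sub (hint (hA.inter hB)) ((hint hA).const_mul t), integral_const_mul,
    integral_const_mul, integral_indicator_one (hA.inter hB), integral_indicator_one hA,
    integral_indicator_one hB, integral_const, probReal_univ, one_smul]
  · exact (hint (hA.inter hB)).sub ((hint hA).const_mul t)
  · exact ((hint (hA.inter hB)).sub ((hint hA).const_mul t)).sub ((hint hB).const_mul s)

end Indicator

lemma MeasureTheory.MeasurePreserving.abs_integral_comp_mul_le {X : Type*} [MeasurableSpace X]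
    {μ : Measure X} {T : X ≃ᵐ X} (hT : MeasurePreserving T μ μ) {f : X → ℝ}
    (hf : MemLp f 2 μ) :
    |∫ x, f (T x) * f x ∂μ| ≤ ∫ x, f x ^ 2 ∂μ := by
  have hsq : Integrable (fun x => f x ^ 2) μ := hf.integrable_sq
  have hsqT : Integrable (fun x => f (T x) ^ 2) μ :=
    (hT.integrable_comp hsq.aestronglyMeasurable).2 hsq
  calc |∫ x, f (T x) * f x ∂μ| ≤ ∫ x, |f (T x) * f x| ∂μ := abs_integral_le_integral_abs
    _ ≤ ∫ x, (f (T x) ^ 2 + f x ^ 2) / 2 ∂μ := by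
      refine integral_mono_of_nonneg (.of_forall fun x => abs_nonneg _)
        ((hsqT.add hsq).div_const 2) (.of_forall fun x => ?_)
      dsimp only
      rw [abs_mul]
      nlinarith [sq_nonneg (|f (T x)| - |f x|), sq_abs (f (T x)), sq_abs (f x)]
    _ = ∫ x, f x ^ 2 ∂μ := by
      rw [integral_div, integral_add hsqT hsq, hT.integral_comp' (fun x => f x ^ 2)]
      ring

section Action

variable {X Ω : Type*} [MeasurableSpace X] [MeasurableSpace Ω] {μ : Measure X}
  {P : Measure Ω} {a : Ω → X ≃ᵐ X}

lemma bddAbove_rayleighQuotients [IsProbabilityMeasure P]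
    (ha : ∀ ω, MeasurePreserving (a ω) μ μ) :
    BddAbove { r : ℝ | ∃ f : X → ℝ, MemLp f 2 μ ∧ (∫ x, f x ∂μ) = 0 ∧
      (∫ x, f x ^ 2 ∂μ) ≠ 0 ∧
      r = (∫ ω, (∫ x, f ((a ω) x) * f x ∂μ) ∂P) / (∫ x, f x ^ 2 ∂μ) } := by
  refine ⟨1, ?_⟩
  rintro r ⟨f, hf, -, hne, rfl⟩
  have hpos : 0 < ∫ x, f x ^ 2 ∂μ :=
    (integral_nonneg fun x => sq_nonneg _).lt_of_ne' hne
  have hnum : |∫ ω, (∫ x, f ((a ω) x) * f x ∂μ) ∂P| ≤ ∫ x, f x ^ 2 ∂μ := by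
    simpa using norm_integral_le_of_norm_le_const (μ := P)
      (.of_forall fun ω =>
        ((ha ω).abs_integral_comp_mul_le hf).trans_eq' (Real.norm_eq_abs _).symm)
  exact (div_le_one hpos).2 ((le_abs_self _).trans hnum)

lemma le_rhoPlus [IsProbabilityMeasure P] (ha : ∀ ω, MeasurePreserving (a ω) μ μ)
    {f : X → ℝ} (hf : MemLp f 2 μ) (hf0 : ∫ x, f x ∂μ = 0) (hf2 : ∫ x, f x ^ 2 ∂μ ≠ 0) :
    (∫ ω, (∫ x, f ((a ω) x) * f x ∂μ) ∂P) / (∫ x, f x ^ 2 ∂μ) ≤ rhoPlus μ P a :=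
  le_csSup (bddAbove_rayleighQuotients ha) ⟨f, hf, hf0, hf2, rfl⟩

end Action

section Boundary

variable {X Ω : Type*} [MeasurableSpace X] [MeasurableSpace Ω] {μ : Measure X}
  {P : Measure Ω} {a : Ω → X ≃ᵐ X} {Y : Set X}

lemma MeasureTheory.MeasurePreserving.measure_image_sdiff_add_measure_preimage_inter
    {T : X ≃ᵐ X} (hT : MeasurePreserving T μ μ) (hY : MeasurableSet Y) :
    μ (T '' Y \ Y) + μ (T ⁻¹' Y ∩ Y) = μ Y := by
  have hboundary : T ⁻¹' (T '' Y \ Y) = Y \ T ⁻¹' Y := by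
    rw [preimage_sdiff, T.preimage_image]
  rw [← hT.measure_preimage_equiv, hboundary, inter_comm]
  exact measure_sdiff_add_inter Y (T.measurable hY)

lemma measurable_measure_preimage_inter [SFinite μ]
    (hj : Measurable fun p : Ω × X => (a p.1) p.2) (hY : MeasurableSet Y) :
    Measurable fun ω => μ (a ω ⁻¹' Y ∩ Y) :=
  measurable_measure_prodMk_left ((hj hY).inter (measurable_snd hY))

lemma expBoundary_add_lintegral_measure_preimage_inter [SFinite μ] [IsProbabilityMeasure P]
    (ha : ∀ ω, MeasurePreserving (a ω) μ μ) (hj : Measurable fun p : Ω × X => (a p.1) p.2)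
    (hY : MeasurableSet Y) :
    expBoundary μ P a Y + ∫⁻ ω, μ (a ω ⁻¹' Y ∩ Y) ∂P = μ Y := by
  rw [expBoundary, ← lintegral_add_right _ (measurable_measure_preimage_inter hj hY)]
  simp [(ha _).measure_image_sdiff_add_measure_preimage_inter hY]

lemma expBoundary_le_measure [IsProbabilityMeasure P] (ha : ∀ ω, MeasurePreserving (a ω) μ μ) :
    expBoundary μ P a Y ≤ μ Y := by
  calc expBoundary μ P a Y ≤ ∫⁻ _, μ Y ∂P := by
        refine lintegral_mono fun ω => (measure_mono sdiff_subset).trans_eq ?_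
        rw [(a ω).image_eq_preimage_symm, ((ha ω).symm (a ω)).measure_preimage_equiv]
    _ = μ Y := by simp

lemma expBoundary_le_of_expBoundary_eq_zero {P₁ P₂ : Measure Ω} [IsProbabilityMeasure P₂]
    (ha : ∀ ω, MeasurePreserving (a ω) μ μ) (c d : ℝ≥0∞) (hinv : expBoundary μ P₁ a Y = 0) :
    expBoundary μ (c • P₁ + d • P₂) a Y ≤ d * μ Y := by
  have hsplit : expBoundary μ (c • P₁ + d • P₂) a Y
      = c * expBoundary μ P₁ a Y + d * expBoundary μ P₂ a Y := by
    simp only [expBoundary, lintegral_add_measure, lintegral_smul_measure, smul_eq_mul]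
  rw [hsplit, hinv, mul_zero, zero_add]
  exact mul_le_mul_right (expBoundary_le_measure ha) d

end Boundary

section Overlap

variable {X Ω : Type*} [MeasurableSpace X] [MeasurableSpace Ω] {μ : Measure X}
  [IsProbabilityMeasure μ] {P : Measure Ω} [IsProbabilityMeasure P] {a : Ω → X ≃ᵐ X}
  {Y : Set X}

lemma mul_measureReal_le_integral_measureReal_preimage_inter
    (ha : ∀ ω, MeasurePreserving (a ω) μ μ) (hj : Measurable fun p : Ω × X => (a p.1) p.2)
    (hY : MeasurableSet Y) {κ : ℝ} (hκ1 : κ ≤ 1)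
    (hbound : expBoundary μ P a Y ≤ ENNReal.ofReal (1 - κ) * μ Y) :
    κ * μ.real Y ≤ ∫ ω, μ.real (a ω ⁻¹' Y ∩ Y) ∂P := by
  have hsum := expBoundary_add_lintegral_measure_preimage_inter (P := P) ha hj hY
  have hm : μ.real Y = (expBoundary μ P a Y).toReal
      + (∫⁻ ω, μ (a ω ⁻¹' Y ∩ Y) ∂P).toReal := by
    have hfin := ENNReal.add_ne_top.1 (hsum ▸ measure_ne_top μ Y)
    rw [← ENNReal.toReal_add hfin.1 hfin.2, hsum, measureReal_def]
  have hboundReal : (expBoundary μ P a Y).toReal ≤ (1 - κ) * μ.real Y := by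
    simpa [ENNReal.toReal_mul, ENNReal.toReal_ofReal (sub_nonneg.2 hκ1), measureReal_def] using
      ENNReal.toReal_mono (by finiteness) hbound
  have hoverlap : ∫ ω, μ.real (a ω ⁻¹' Y ∩ Y) ∂P = (∫⁻ ω, μ (a ω ⁻¹' Y ∩ Y) ∂P).toReal :=
    integral_toReal (measurable_measure_preimage_inter hj hY).aemeasurable
      (.of_forall fun _ => measure_lt_top _ _)
  linarith

lemma integrable_measureReal_preimage_inter
    (hj : Measurable fun p : Ω × X => (a p.1) p.2) (hY : MeasurableSet Y) :
    Integrable (fun ω => μ.real (a ω ⁻¹' Y ∩ Y)) P :=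
  .of_bound (measurable_measure_preimage_inter hj hY).ennreal_toReal.aestronglyMeasurable 1
    (.of_forall fun _ => by
      rw [Real.norm_eq_abs, abs_of_nonneg measureReal_nonneg]
      exact measureReal_le_one (μ := μ))

lemma integral_measureReal_preimage_inter_le_rhoPlus
    (ha : ∀ ω, MeasurePreserving (a ω) μ μ) (hj : Measurable fun p : Ω × X => (a p.1) p.2)
    (hY : MeasurableSet Y) (hY0 : 0 < μ.real Y) (hY1 : μ.real Y < 1) :
    ∫ ω, μ.real (a ω ⁻¹' Y ∩ Y) ∂P - μ.real Y ^ 2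
      ≤ rhoPlus μ P a * (μ.real Y - μ.real Y ^ 2) := by
  set m := μ.real Y
  have hcorr : ∀ ω, ∫ x, (Y.indicator 1 (a ω x) - m) * (Y.indicator 1 x - m) ∂μ
      = μ.real (a ω ⁻¹' Y ∩ Y) - m ^ 2 := fun ω => by
    have h := integral_indicator_one_sub_mul_indicator_one_sub (μ := μ)
      ((a ω).measurable hY) hY m m
    rw [(ha ω).measureReal_preimage hY.nullMeasurableSet] at h
    -- `(a ω ⁻¹' Y).indicator 1 x` and `Y.indicator 1 (a ω x)` agree definitionally
    exact h.trans (by ring)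
  have hvar : ∫ x, (Y.indicator 1 x - m) ^ 2 ∂μ = m - m ^ 2 := by
    simp_rw [sq, integral_indicator_one_sub_mul_indicator_one_sub hY hY m m, inter_self]
    ring
  have hmean : ∫ x, (Y.indicator 1 x - m) ∂μ = 0 := by
    rw [integral_sub ?_ (integrable_const m), integral_indicator_one hY, integral_const,
      probReal_univ, one_smul, sub_self]
    exact (integrable_const 1).indicator hY
  have hnum : ∫ ω, (∫ x, (Y.indicator 1 (a ω x) - m) * (Y.indicator 1 x - m) ∂μ) ∂P
      = ∫ ω, μ.real (a ω ⁻¹' Y ∩ Y) ∂P - m ^ 2 := by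
    simp_rw [hcorr]
    rw [integral_sub (integrable_measureReal_preimage_inter hj hY) (integrable_const _),
      integral_const, probReal_univ, one_smul]
  have hvar_pos : 0 < m - m ^ 2 := by nlinarith
  have hf : MemLp (fun x => Y.indicator 1 x - m) 2 μ :=
    (memLp_indicator_const 2 hY (1 : ℝ) (by simp)).sub (memLp_const m)
  have hrayleigh := le_rhoPlus (P := P) ha hf hmean (hvar ▸ hvar_pos.ne')
  rwa [hnum, hvar, div_le_iff₀ hvar_pos] at hrayleigh

end Overlap

theorem invariant_set_measure_lower_bound_general {X Ω : Type*} [MeasurableSpace X]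
    [MeasurableSpace Ω] (μ : Measure X) (P P₁ P₂ : Measure Ω) (a : Ω → X ≃ᵐ X)
    [IsProbabilityMeasure μ] [IsProbabilityMeasure P]
    [IsProbabilityMeasure P₂]
    (ha : ∀ ω, MeasurePreserving (a ω) μ μ)
    (hj : Measurable fun p : Ω × X => (a p.1) p.2)
    (κ : ℝ) (hκ1 : κ ≤ 1)
    (hρ : rhoPlus μ P a < κ)
    (hdec : P = ENNReal.ofReal κ • P₁ + ENNReal.ofReal (1 - κ) • P₂)
    (Y : Set X) (hY : MeasurableSet Y) (hYpos : 0 < μ Y)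
    (hinv : expBoundary μ P₁ a Y = 0) :
    ENNReal.ofReal ((κ - rhoPlus μ P a) / (1 - rhoPlus μ P a)) ≤ μ Y := by
  set ρ := rhoPlus μ P a
  have hρ1 : 0 < 1 - ρ := by linarith
  rw [← ofReal_measureReal]
  refine ENNReal.ofReal_le_ofReal ((div_le_iff₀ hρ1).2 ?_)
  rcases (measureReal_le_one (μ := μ) (s := Y)).eq_or_lt with hY_eq_one | hY_lt_one
  · rw [hY_eq_one]
    linarith
  have hY0 : 0 < μ.real Y := ENNReal.toReal_pos hYpos.ne' (measure_ne_top μ Y)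
  have hlower := mul_measureReal_le_integral_measureReal_preimage_inter ha hj hY hκ1
    (hdec ▸ expBoundary_le_of_expBoundary_eq_zero ha _ _ hinv)
  have hupper := integral_measureReal_preimage_inter_le_rhoPlus (P := P) ha hj hY hY0 hY_lt_one
  nlinarith

theorem invariant_set_measure_lower_bound {X Ω : Type*} [MeasurableSpace X]
    [MeasurableSpace Ω] (μ : Measure X) (P P₁ P₂ : Measure Ω) (a : Ω → X ≃ᵐ X)
    [IsProbabilityMeasure μ] [IsProbabilityMeasure P]
    [IsProbabilityMeasure P₁] [IsProbabilityMeasure P₂]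
    (ha : ∀ ω, MeasurePreserving (a ω) μ μ)
    (hj : Measurable fun p : Ω × X => (a p.1) p.2)
    (κ : ℝ) (hκ1 : κ ≤ 1)
    (hρ : rhoPlus μ P a < κ)
    (hdec : P = ENNReal.ofReal κ • P₁ + ENNReal.ofReal (1 - κ) • P₂)
    (Y : Set X) (hY : MeasurableSet Y) (hYpos : 0 < μ Y)
    (hinv : expBoundary μ P₁ a Y = 0) :
    ENNReal.ofReal ((κ - rhoPlus μ P a) / (1 - rhoPlus μ P a)) ≤ μ Y :=
  invariant_set_measure_lower_bound_general μ P P₁ P₂ a ha hj κ hκ1 hρ hdec Y hY hYpos hinv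
end

section
/- Let λ be a Borel probability measure on Aut(X,μ), ρ = ρ⁺(λ), κ > ρ, and λ = κλ₁ + (1−κ)λ₂ a convex decomposition into probability measures. Then every measurable Y with 0 < μ(Y) ≤ (1/2)·(κ−ρ)/(1−ρ) satisfies e_{λ₁}(Y)/μ(Y) ≥ (1/2)·(κ−ρ)/κ. -/
/-!
Test the Rayleigh quotient defining `ρ = ρ⁺(λ)` on the centred indicator `f = 1_Y - μ(Y)`.
Its variance is `μ(Y)(1 - μ(Y))` and `⟨M_λ f, f⟩ = ∫ μ(Y ∩ a⁻¹Y) dλ(a) - μ(Y)²`, so the mean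
self-overlap `J = ∫ μ(Y ∩ a⁻¹Y) dλ(a)` is at most `μ(Y)² + ρ μ(Y)(1 - μ(Y))`. Since `λ ≥ κλ₁`,
the `λ₁`-overlap `J₁` satisfies `κ J₁ ≤ J`, while `e_{λ₁}(Y) = μ(Y) - J₁` because each `a`
preserves `μ`. Hence `κ e_{λ₁}(Y) ≥ μ(Y)(κ - ρ) - μ(Y)²(1 - ρ)`, and the smallness of `μ(Y)`
keeps the last term below half of the first.
-/

open MeasureTheory
open scoped ENNReal

section

variable {X Ω : Type*} [MeasurableSpace X] [MeasurableSpace Ω] {μ : Measure X}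

theorem integral_comp_mul_le_integral_sq {g : X → X} (hg : MeasurePreserving g μ μ)
    {f : X → ℝ} (hf : MemLp f 2 μ) : ∫ x, f (g x) * f x ∂μ ≤ ∫ x, f x ^ 2 ∂μ := by
  have hfg : MemLp (fun x => f (g x)) 2 μ := hf.comp_measurePreserving hg
  have hsq : ∫ x, f (g x) ^ 2 ∂μ = ∫ x, f x ^ 2 ∂μ := by
    have := integral_map (f := fun y => f y ^ 2) hg.aemeasurable
      (hg.map_eq ▸ hf.integrable_sq.aestronglyMeasurable)
    rwa [hg.map_eq, eq_comm] at this
  calc ∫ x, f (g x) * f x ∂μ ≤ ∫ x, (f (g x) ^ 2 + f x ^ 2) / 2 ∂μ :=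
        integral_mono (hfg.integrable_mul hf)
          ((hfg.integrable_sq.add hf.integrable_sq).div_const 2)
          fun x => by nlinarith [two_mul_le_add_sq (f (g x)) (f x)]
    _ = ∫ x, f x ^ 2 ∂μ := by
        rw [integral_div, integral_add hfg.integrable_sq hf.integrable_sq, hsq]; ring

/-- The quadratic form `⟨M_λ f, f⟩` of the averaging operator `M_λ`. -/
noncomputable def averagingForm (μ : Measure X) (P : Measure Ω) (a : Ω → X ≃ᵐ X)
    (f : X → ℝ) : ℝ :=
  ∫ ω, (∫ x, f (a ω x) * f x ∂μ) ∂P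

theorem averagingForm_le_integral_sq {P : Measure Ω} [IsProbabilityMeasure P]
    {a : Ω → X ≃ᵐ X} (ha : ∀ ω, MeasurePreserving (a ω) μ μ) {f : X → ℝ}
    (hf : MemLp f 2 μ) : averagingForm μ P a f ≤ ∫ x, f x ^ 2 ∂μ := by
  by_cases hint : Integrable (fun ω => ∫ x, f (a ω x) * f x ∂μ) P
  · calc averagingForm μ P a f ≤ ∫ _ : Ω, (∫ x, f x ^ 2 ∂μ) ∂P :=
          integral_mono hint (integrable_const _)
            fun ω => integral_comp_mul_le_integral_sq (ha ω) hf
      _ = ∫ x, f x ^ 2 ∂μ := by simp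
  · rw [averagingForm, integral_undef hint]
    exact integral_nonneg fun x => sq_nonneg _

theorem averagingForm_div_le_rhoPlus {P : Measure Ω} [IsProbabilityMeasure P]
    {a : Ω → X ≃ᵐ X} (ha : ∀ ω, MeasurePreserving (a ω) μ μ) {f : X → ℝ}
    (hf : MemLp f 2 μ) (hf0 : ∫ x, f x ∂μ = 0) (hf2 : ∫ x, f x ^ 2 ∂μ ≠ 0) :
    averagingForm μ P a f / ∫ x, f x ^ 2 ∂μ ≤ rhoPlus μ P a := by
  refine le_csSup ⟨1, ?_⟩ ⟨f, hf, hf0, hf2, rfl⟩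
  rintro r ⟨g, hg, -, -, rfl⟩
  exact div_le_one_of_le₀ (averagingForm_le_integral_sq ha hg)
    (integral_nonneg fun x => sq_nonneg _)

theorem integral_indicator_one_sub_mul [IsProbabilityMeasure μ] {S T : Set X}
    (hS : MeasurableSet S) (hT : MeasurableSet T) (c : ℝ) :
    ∫ x, (S.indicator 1 x - c) * (T.indicator 1 x - c) ∂μ =
      μ.real (S ∩ T) - c * μ.real S - c * μ.real T + c ^ 2 := by
  have hi : ∀ {U : Set X}, MeasurableSet U → Integrable (U.indicator (1 : X → ℝ)) μ :=
    fun hU => (integrable_const 1).indicator hU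
  have hpt : ∀ x, (S.indicator 1 x - c) * (T.indicator 1 x - c) =
      (S ∩ T).indicator (1 : X → ℝ) x - c * S.indicator 1 x - c * T.indicator 1 x + c ^ 2 := by
    intro x; rw [Set.inter_indicator_one, Pi.mul_apply]; ring
  have hST := hi (hS.inter hT)
  have hcS := (hi hS).const_mul c
  have hcT := (hi hT).const_mul c
  simp_rw [hpt]
  rw [integral_add ?_ (integrable_const _), integral_sub ?_ hcT, integral_sub hST hcS,
    integral_const_mul, integral_const_mul, integral_indicator_one (hS.inter hT),
    integral_indicator_one hS, integral_indicator_one hT, integral_const]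
  · simp
  · exact hST.sub hcS
  · exact (hST.sub hcS).sub hcT

theorem integral_indicator_one_sub_measureReal [IsProbabilityMeasure μ] {Y : Set X}
    (hY : MeasurableSet Y) : ∫ x, (Y.indicator 1 x - μ.real Y) ∂μ = 0 := by
  rw [integral_sub ((integrable_const 1).indicator hY) (integrable_const _),
    integral_indicator_one hY, integral_const]
  simp

theorem measurable_measure_inter_preimage [SFinite μ] {a : Ω → X ≃ᵐ X}
    (hj : Measurable fun p : Ω × X => a p.1 p.2) {Y : Set X} (hY : MeasurableSet Y) :
    Measurable fun ω => μ (Y ∩ a ω ⁻¹' Y) :=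
  measurable_measure_prodMk_left (ν := μ) ((measurable_snd hY).inter (hj hY))

theorem lintegral_measure_inter_preimage_le {Q : Measure Ω} [IsProbabilityMeasure Q]
    (a : Ω → X ≃ᵐ X) (Y : Set X) : ∫⁻ ω, μ (Y ∩ a ω ⁻¹' Y) ∂Q ≤ μ Y :=
  (lintegral_mono fun _ => measure_mono Set.inter_subset_left).trans_eq (by simp)

theorem lintegral_measure_inter_preimage_ne_top [IsFiniteMeasure μ] {Q : Measure Ω}
    [IsProbabilityMeasure Q] (a : Ω → X ≃ᵐ X) (Y : Set X) :
    ∫⁻ ω, μ (Y ∩ a ω ⁻¹' Y) ∂Q ≠ ∞ :=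
  ne_top_of_le_ne_top (measure_ne_top μ Y) (lintegral_measure_inter_preimage_le a Y)

theorem averagingForm_indicator_one_sub_measureReal [IsProbabilityMeasure μ]
    {P : Measure Ω} [IsProbabilityMeasure P] {a : Ω → X ≃ᵐ X}
    (ha : ∀ ω, MeasurePreserving (a ω) μ μ) (hj : Measurable fun p : Ω × X => a p.1 p.2)
    {Y : Set X} (hY : MeasurableSet Y) :
    averagingForm μ P a (fun x => Y.indicator 1 x - μ.real Y) =
      (∫⁻ ω, μ (Y ∩ a ω ⁻¹' Y) ∂P).toReal - μ.real Y ^ 2 := by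
  have hinner : ∀ ω, ∫ x, (Y.indicator 1 (a ω x) - μ.real Y) * (Y.indicator 1 x - μ.real Y) ∂μ
      = μ.real (Y ∩ a ω ⁻¹' Y) - μ.real Y ^ 2 := by
    intro ω
    have hpre : μ.real (a ω ⁻¹' Y) = μ.real Y := by
      simp only [Measure.real, (ha ω).measure_preimage hY.nullMeasurableSet]
    have hcomp : ∀ x, Y.indicator (1 : X → ℝ) (a ω x) = (a ω ⁻¹' Y).indicator (1 : X → ℝ) x :=
      fun _ => rfl
    simp_rw [hcomp]
    rw [integral_indicator_one_sub_mul ((a ω).measurable hY) hY, hpre, Set.inter_comm]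
    ring
  have hmeas := measurable_measure_inter_preimage (μ := μ) hj hY
  have hout : ∫ ω, μ.real (Y ∩ a ω ⁻¹' Y) ∂P = (∫⁻ ω, μ (Y ∩ a ω ⁻¹' Y) ∂P).toReal :=
    integral_toReal hmeas.aemeasurable (Filter.Eventually.of_forall fun _ => measure_lt_top μ _)
  rw [averagingForm]
  simp_rw [hinner]
  rw [integral_sub ?_ (integrable_const _), integral_const, hout]
  · simp
  · exact integrable_toReal_of_lintegral_ne_top hmeas.aemeasurable
      (lintegral_measure_inter_preimage_ne_top a Y)

theorem toReal_lintegral_measure_inter_preimage_le_rhoPlus [IsProbabilityMeasure μ]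
    {P : Measure Ω} [IsProbabilityMeasure P] {a : Ω → X ≃ᵐ X}
    (ha : ∀ ω, MeasurePreserving (a ω) μ μ) (hj : Measurable fun p : Ω × X => a p.1 p.2)
    {Y : Set X} (hY : MeasurableSet Y) (hY0 : 0 < μ.real Y) (hY1 : μ.real Y < 1) :
    (∫⁻ ω, μ (Y ∩ a ω ⁻¹' Y) ∂P).toReal ≤
      μ.real Y ^ 2 + rhoPlus μ P a * (μ.real Y * (1 - μ.real Y)) := by
  set m := μ.real Y
  have hsq : ∫ x, (Y.indicator 1 x - m) ^ 2 ∂μ = m * (1 - m) := by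
    simp_rw [sq]
    rw [integral_indicator_one_sub_mul hY hY, Set.inter_self]
    ring
  have hvar : 0 < m * (1 - m) := mul_pos hY0 (by linarith)
  have hρ := averagingForm_div_le_rhoPlus (P := P) ha (f := fun x => Y.indicator 1 x - m)
    (((memLp_const (1 : ℝ)).indicator hY).sub (memLp_const m))
    (integral_indicator_one_sub_measureReal hY) (hsq ▸ hvar.ne')
  rw [averagingForm_indicator_one_sub_measureReal ha hj hY, hsq, div_le_iff₀ hvar] at hρ
  linarith

theorem measure_image_diff_eq [IsFiniteMeasure μ] {e : X ≃ᵐ X} (he : MeasurePreserving e μ μ)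
    {Y : Set X} (hY : MeasurableSet Y) : μ (e '' Y \ Y) = μ Y - μ (Y ∩ e ⁻¹' Y) := by
  rw [← he.measure_preimage ((e.measurableSet_image.2 hY).diff hY).nullMeasurableSet,
    Set.preimage_sdiff, e.preimage_image, ← Set.sdiff_self_inter,
    measure_sdiff Set.inter_subset_left (hY.inter (e.measurable hY)).nullMeasurableSet
      (measure_ne_top μ _)]

theorem expBoundary_eq [IsFiniteMeasure μ] {Q : Measure Ω} [IsProbabilityMeasure Q]
    {a : Ω → X ≃ᵐ X} (ha : ∀ ω, MeasurePreserving (a ω) μ μ)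
    (hj : Measurable fun p : Ω × X => a p.1 p.2) {Y : Set X} (hY : MeasurableSet Y) :
    expBoundary μ Q a Y = μ Y - ∫⁻ ω, μ (Y ∩ a ω ⁻¹' Y) ∂Q := by
  rw [expBoundary, lintegral_congr fun ω => measure_image_diff_eq (ha ω) hY,
    lintegral_sub (measurable_measure_inter_preimage hj hY)
      (lintegral_measure_inter_preimage_ne_top a Y) (Filter.Eventually.of_forall fun _ => measure_mono Set.inter_subset_left)]
  simp

theorem mul_lintegral_le_lintegral_of_eq_smul_add {P P₁ P₂ : Measure Ω} {c d : ℝ≥0∞}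
    (hP : P = c • P₁ + d • P₂) (f : Ω → ℝ≥0∞) : c * ∫⁻ ω, f ω ∂P₁ ≤ ∫⁻ ω, f ω ∂P := by
  rw [hP, lintegral_add_measure, lintegral_smul_measure, lintegral_smul_measure]
  exact le_self_add

end

theorem small_sets_expand_general {X Ω : Type*} [MeasurableSpace X]
    [MeasurableSpace Ω] (μ : Measure X) (P P₁ P₂ : Measure Ω) (a : Ω → X ≃ᵐ X)
    [IsProbabilityMeasure μ] [IsProbabilityMeasure P]
    [IsProbabilityMeasure P₁]
    (ha : ∀ ω, MeasurePreserving (a ω) μ μ)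
    (hj : Measurable fun p : Ω × X => (a p.1) p.2)
    (κ : ℝ) (hκ1 : κ ≤ 1)
    (hρ : rhoPlus μ P a < κ)
    (hdec : P = ENNReal.ofReal κ • P₁ + ENNReal.ofReal (1 - κ) • P₂)
    (Y : Set X) (hY : MeasurableSet Y) (hYpos : 0 < μ Y)
    (hYsmall : (μ Y).toReal ≤ (1 / 2) * ((κ - rhoPlus μ P a) / (1 - rhoPlus μ P a))) :
    (1 / 2) * ((κ - rhoPlus μ P a) / κ) ≤
      (expBoundary μ P₁ a Y).toReal / (μ Y).toReal := by
  set ρ := rhoPlus μ P a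
  rcases le_or_gt κ 0 with hκ0 | hκ0
  · have hlhs : (κ - ρ) / κ ≤ 0 := div_nonpos_of_nonneg_of_nonpos (by linarith) hκ0
    have hrhs : 0 ≤ (expBoundary μ P₁ a Y).toReal / (μ Y).toReal := by positivity
    linarith
  rw [← measureReal_def] at hYsmall ⊢
  set m := μ.real Y
  have hm0 : 0 < m := ENNReal.toReal_pos hYpos.ne' (measure_ne_top μ Y)
  have hmρ : m * (1 - ρ) ≤ (κ - ρ) / 2 :=
    (le_div_iff₀ (by linarith)).1 (hYsmall.trans_eq (by ring))
  have hm1 : m < 1 := by nlinarith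
  have hJ := toReal_lintegral_measure_inter_preimage_le_rhoPlus (P := P) ha hj hY hm0 hm1
  have hJ₁ : κ * (∫⁻ ω, μ (Y ∩ a ω ⁻¹' Y) ∂P₁).toReal ≤
      (∫⁻ ω, μ (Y ∩ a ω ⁻¹' Y) ∂P).toReal := by
    simpa [ENNReal.toReal_mul, hκ0.le] using ENNReal.toReal_mono
      (lintegral_measure_inter_preimage_ne_top a Y)
      (mul_lintegral_le_lintegral_of_eq_smul_add hdec fun ω => μ (Y ∩ a ω ⁻¹' Y))
  have hE : (expBoundary μ P₁ a Y).toReal = m - (∫⁻ ω, μ (Y ∩ a ω ⁻¹' Y) ∂P₁).toReal := by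
    rw [expBoundary_eq ha hj hY, ENNReal.toReal_sub_of_le
      (lintegral_measure_inter_preimage_le a Y) (measure_ne_top μ Y)]
    rfl
  rw [hE, le_div_iff₀ hm0, show 1 / 2 * ((κ - ρ) / κ) * m = m * (κ - ρ) / 2 / κ by ring,
    div_le_iff₀ hκ0]
  nlinarith [mul_le_mul_of_nonneg_left hmρ hm0.le]

theorem small_sets_expand {X Ω : Type*} [MeasurableSpace X]
    [MeasurableSpace Ω] (μ : Measure X) (P P₁ P₂ : Measure Ω) (a : Ω → X ≃ᵐ X)
    [IsProbabilityMeasure μ] [IsProbabilityMeasure P]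
    [IsProbabilityMeasure P₁] [IsProbabilityMeasure P₂]
    (ha : ∀ ω, MeasurePreserving (a ω) μ μ)
    (hj : Measurable fun p : Ω × X => (a p.1) p.2)
    (κ : ℝ) (hκ1 : κ ≤ 1)
    (hρ : rhoPlus μ P a < κ)
    (hdec : P = ENNReal.ofReal κ • P₁ + ENNReal.ofReal (1 - κ) • P₂)
    (Y : Set X) (hY : MeasurableSet Y) (hYpos : 0 < μ Y)
    (hYsmall : (μ Y).toReal ≤ (1 / 2) * ((κ - rhoPlus μ P a) / (1 - rhoPlus μ P a))) :
    (1 / 2) * ((κ - rhoPlus μ P a) / κ) ≤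
      (expBoundary μ P₁ a Y).toReal / (μ Y).toReal :=
  small_sets_expand_general μ P P₁ P₂ a ha hj κ hκ1 hρ hdec Y hY hYpos hYsmall
end

section
/- With λ = κλ₁ + (1−κ)λ₂, ρ = ρ⁺(λ) < κ as above, for every measurable Y with y = μ(Y) ∈ (0,1) one has the inequality e_{λ₁}(Y)/y ≥ (κ−ρ)/κ − y(1−ρ)/κ. In particular any λ₁-invariant set of positive measure has measure at least (κ−ρ)/(1−ρ). -/
open MeasureTheory
open scoped ENNReal

/-!
Testing the definition of `ρ⁺(λ)` against `f = 𝟙_Y - y`, whose correlation with its translate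
by `a` is `y - y² - μ(Y \ a⁻¹Y)`, gives `(1 - ρ)(y - y²) ≤ e_λ(Y)`. Splitting
`e_λ = κ e_{λ₁} + (1 - κ) e_{λ₂}` and bounding `e_{λ₂}(Y) ≤ y` turns this into
`y(κ - ρ) - y²(1 - ρ) ≤ κ e_{λ₁}(Y)`; dividing by `κ y` gives the expansion inequality, and for
`e_{λ₁}(Y) = 0` dividing by `y(1 - ρ) > 0` gives `y ≥ (κ - ρ)/(1 - ρ)`.
-/

section

variable {X Ω : Type*} [MeasurableSpace X] [MeasurableSpace Ω] {μ : Measure X} {Y : Set X}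

theorem measure_image_diff_eq_measure_diff_preimage {e : X ≃ᵐ X}
    (he : MeasurePreserving e μ μ) (hY : MeasurableSet Y) :
    μ (e '' Y \ Y) = μ (Y \ e ⁻¹' Y) := by
  have hpre : e ⁻¹' (e '' Y \ Y) = Y \ e ⁻¹' Y := by
    rw [Set.preimage_sdiff, e.preimage_image]
  rw [← hpre, he.measure_preimage ((e.measurableSet_image.2 hY).diff hY).nullMeasurableSet]

theorem measurable_measure_diff_preimage [SFinite μ] {a : Ω → X → X}
    (hj : Measurable fun p : Ω × X => a p.1 p.2) (hY : MeasurableSet Y) :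
    Measurable fun ω => μ (Y \ a ω ⁻¹' Y) :=
  measurable_measure_prodMk_left ((measurable_snd hY).diff (hj hY))

theorem integrable_measureReal_diff_preimage [IsFiniteMeasure μ] {P : Measure Ω}
    [IsFiniteMeasure P] {a : Ω → X → X} (hj : Measurable fun p : Ω × X => a p.1 p.2)
    (hY : MeasurableSet Y) : Integrable (fun ω => μ.real (Y \ a ω ⁻¹' Y)) P :=
  .of_bound (measurable_measure_diff_preimage hj hY).ennreal_toReal.aestronglyMeasurable
    (μ.real Y) (ae_of_all _ fun _ => by
      rw [Real.norm_of_nonneg measureReal_nonneg]; exact measureReal_mono Set.sdiff_subset)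

theorem expBoundary_toReal_eq_integral [IsFiniteMeasure μ] (P : Measure Ω) {a : Ω → X ≃ᵐ X}
    (ha : ∀ ω, MeasurePreserving (a ω) μ μ) (hj : Measurable fun p : Ω × X => a p.1 p.2)
    (hY : MeasurableSet Y) :
    (expBoundary μ P a Y).toReal = ∫ ω, μ.real (Y \ a ω ⁻¹' Y) ∂P := by
  simp_rw [expBoundary, measure_image_diff_eq_measure_diff_preimage (ha _) hY, measureReal_def]
  exact (integral_toReal (measurable_measure_diff_preimage hj hY).aemeasurable
    (ae_of_all _ fun _ => measure_lt_top _ _)).symm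

theorem integral_centered_indicator_comp_mul [IsProbabilityMeasure μ] {e : X → X}
    (he : MeasurePreserving e μ μ) (hY : MeasurableSet Y) :
    ∫ x, (Y.indicator 1 (e x) - μ.real Y) * (Y.indicator 1 x - μ.real Y) ∂μ =
      μ.real Y - μ.real Y ^ 2 - μ.real (Y \ e ⁻¹' Y) := by
  set y := μ.real Y
  have hpre : MeasurableSet (e ⁻¹' Y) := he.measurable hY
  have hpt : ∀ x, (Y.indicator 1 (e x) - y) * (Y.indicator 1 x - y) = (Y ∩ e ⁻¹' Y).indicator 1 x -
      (y * (e ⁻¹' Y).indicator 1 x + y * Y.indicator 1 x - y ^ 2) := by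
    intro x
    rw [Set.inter_indicator_one, ← Set.indicator_comp_right]
    simp only [Pi.mul_apply, Function.comp_def, Pi.one_def]
    ring
  have hI : ∀ s, MeasurableSet s → Integrable (s.indicator (1 : X → ℝ)) μ :=
    fun _ hs => (integrable_const 1).indicator hs
  have h₁ := hI _ (hY.inter hpre)
  have h₂ := (hI _ hpre).const_mul y
  have h₃ := (hI _ hY).const_mul y
  have h₂₃ : Integrable (fun x => y * (e ⁻¹' Y).indicator 1 x + y * Y.indicator 1 x) μ :=
    h₂.add h₃
  have h₂₃₄ : Integrable
      (fun x => y * (e ⁻¹' Y).indicator 1 x + y * Y.indicator 1 x - y ^ 2) μ :=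
    h₂₃.sub (integrable_const _)
  simp_rw [hpt]
  rw [integral_sub h₁ h₂₃₄, integral_sub h₂₃ (integrable_const _), integral_add h₂ h₃,
    integral_const_mul, integral_const_mul, integral_indicator_one (hY.inter hpre),
    integral_indicator_one hpre, integral_indicator_one hY, integral_const, probReal_univ, one_smul,
    he.measureReal_preimage hY.nullMeasurableSet]
  linear_combination measureReal_inter_add_sdiff (μ := μ) (s := Y) hpre

theorem abs_integral_comp_mul_le_integral_sq {f : X → ℝ} (hf : MemLp f 2 μ) {e : X ≃ᵐ X}
    (he : MeasurePreserving e μ μ) :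
    |∫ x, f (e x) * f x ∂μ| ≤ ∫ x, f x ^ 2 ∂μ := by
  have hfe : MemLp (fun x => f (e x)) 2 μ := hf.comp_measurePreserving he
  calc |∫ x, f (e x) * f x ∂μ|
      ≤ ∫ x, |f (e x) * f x| ∂μ := abs_integral_le_integral_abs
    _ ≤ ∫ x, (f (e x) ^ 2 + f x ^ 2) / 2 ∂μ := by
        refine integral_mono_of_nonneg (ae_of_all _ fun _ => abs_nonneg _)
          ((hfe.integrable_sq.add hf.integrable_sq).div_const 2) (ae_of_all _ fun x => ?_)
        dsimp only
        rw [abs_mul]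
        nlinarith [two_mul_le_add_sq |f (e x)| |f x|, sq_abs (f (e x)), sq_abs (f x)]
    _ = ∫ x, f x ^ 2 ∂μ := by
        rw [integral_div, integral_add hfe.integrable_sq hf.integrable_sq,
          he.integral_comp' fun x => f x ^ 2]
        ring

variable {P : Measure Ω} [IsProbabilityMeasure P] {a : Ω → X ≃ᵐ X}

theorem integral_integral_comp_mul_le_integral_sq (ha : ∀ ω, MeasurePreserving (a ω) μ μ)
    {f : X → ℝ} (hf : MemLp f 2 μ) :
    ∫ ω, ∫ x, f (a ω x) * f x ∂μ ∂P ≤ ∫ x, f x ^ 2 ∂μ := by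
  have h := norm_integral_le_of_norm_le_const (μ := P)
    (f := fun ω => ∫ x, f (a ω x) * f x ∂μ)
    (ae_of_all _ fun ω => abs_integral_comp_mul_le_integral_sq hf (ha ω))
  rw [probReal_univ, mul_one] at h
  exact (le_abs_self _).trans h

theorem integral_integral_comp_mul_le_rhoPlus_mul (ha : ∀ ω, MeasurePreserving (a ω) μ μ)
    {f : X → ℝ} (hf : MemLp f 2 μ) (hf₀ : ∫ x, f x ∂μ = 0) :
    ∫ ω, ∫ x, f (a ω x) * f x ∂μ ∂P ≤ rhoPlus μ P a * ∫ x, f x ^ 2 ∂μ := by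
  rcases (integral_nonneg fun x => sq_nonneg (f x) : 0 ≤ ∫ x, f x ^ 2 ∂μ).eq_or_lt
    with hzero | hpos
  · rw [← hzero, mul_zero, hzero]
    exact integral_integral_comp_mul_le_integral_sq ha hf
  · have hbdd : BddAbove {r : ℝ | ∃ g : X → ℝ, MemLp g 2 μ ∧ (∫ x, g x ∂μ) = 0 ∧
        (∫ x, g x ^ 2 ∂μ) ≠ 0 ∧
        r = (∫ ω, (∫ x, g ((a ω) x) * g x ∂μ) ∂P) / (∫ x, g x ^ 2 ∂μ)} := by
      refine ⟨1, ?_⟩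
      rintro r ⟨g, hg, -, -, rfl⟩
      exact div_le_one_of_le₀ (integral_integral_comp_mul_le_integral_sq ha hg)
        (integral_nonneg fun x => sq_nonneg (g x))
    rw [← div_le_iff₀ hpos]
    exact le_csSup hbdd ⟨f, hf, hf₀, hpos.ne', rfl⟩

theorem one_sub_rhoPlus_mul_le_integral_measureReal_diff [IsProbabilityMeasure μ]
    (ha : ∀ ω, MeasurePreserving (a ω) μ μ) (hj : Measurable fun p : Ω × X => a p.1 p.2)
    (hY : MeasurableSet Y) :
    (1 - rhoPlus μ P a) * (μ.real Y - μ.real Y ^ 2) ≤ ∫ ω, μ.real (Y \ a ω ⁻¹' Y) ∂P := by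
  have hf : MemLp (fun x => Y.indicator 1 x - μ.real Y) 2 μ :=
    (memLp_indicator_const 2 hY 1 (.inr (measure_ne_top μ Y))).sub (memLp_const _)
  have hf₀ : ∫ x, (Y.indicator 1 x - μ.real Y) ∂μ = 0 := by
    rw [integral_sub ((integrable_const 1).indicator hY) (integrable_const _),
      integral_indicator_one hY, integral_const, probReal_univ, one_smul, sub_self]
  have hsq : ∫ x, (Y.indicator 1 x - μ.real Y) ^ 2 ∂μ = μ.real Y - μ.real Y ^ 2 := by
    simpa [sq] using integral_centered_indicator_comp_mul (MeasurePreserving.id μ) hY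
  have h := integral_integral_comp_mul_le_rhoPlus_mul (P := P) ha hf hf₀
  simp_rw [integral_centered_indicator_comp_mul (ha _) hY, hsq] at h
  rw [integral_sub (integrable_const _) (integrable_measureReal_diff_preimage hj hY),
    integral_const, probReal_univ, one_smul] at h
  linear_combination h

theorem mem_Icc_of_ofReal_add_ofReal_one_sub_eq_one {κ : ℝ}
    (h : ENNReal.ofReal κ + ENNReal.ofReal (1 - κ) = 1) : κ ∈ Set.Icc 0 1 := by
  have h' := congrArg ENNReal.toReal h
  rw [ENNReal.toReal_add ENNReal.ofReal_ne_top ENNReal.ofReal_ne_top, ENNReal.toReal_ofReal',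
    ENNReal.toReal_ofReal', ENNReal.toReal_one] at h'
  refine ⟨?_, ?_⟩ <;> by_contra! hκ
  · rw [max_eq_right hκ.le, max_eq_left (by linarith)] at h'
    linarith
  · rw [max_eq_left (by linarith), max_eq_right (by linarith)] at h'
    linarith

theorem integral_ofReal_smul_add_ofReal_one_sub_smul {E : Type*} [NormedAddCommGroup E]
    [NormedSpace ℝ E] {P₁ P₂ : Measure Ω} {κ : ℝ} (hκ : κ ∈ Set.Icc 0 1) {g : Ω → E}
    (h₁ : Integrable g P₁) (h₂ : Integrable g P₂) :
    ∫ ω, g ω ∂(ENNReal.ofReal κ • P₁ + ENNReal.ofReal (1 - κ) • P₂) =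
      κ • ∫ ω, g ω ∂P₁ + (1 - κ) • ∫ ω, g ω ∂P₂ := by
  rw [integral_add_measure (h₁.smul_measure ENNReal.ofReal_ne_top)
      (h₂.smul_measure ENNReal.ofReal_ne_top), integral_smul_measure, integral_smul_measure,
    ENNReal.toReal_ofReal hκ.1, ENNReal.toReal_ofReal (sub_nonneg.2 hκ.2)]

theorem measureReal_mul_sub_le_mul_expBoundary [IsProbabilityMeasure μ] {P₁ P₂ : Measure Ω}
    [IsFiniteMeasure P₁] [IsProbabilityMeasure P₂] (ha : ∀ ω, MeasurePreserving (a ω) μ μ)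
    (hj : Measurable fun p : Ω × X => a p.1 p.2) {κ : ℝ} (hκ : κ ∈ Set.Icc 0 1)
    (hdec : P = ENNReal.ofReal κ • P₁ + ENNReal.ofReal (1 - κ) • P₂) (hY : MeasurableSet Y) :
    μ.real Y * (κ - rhoPlus μ P a) - μ.real Y ^ 2 * (1 - rhoPlus μ P a) ≤
      κ * (expBoundary μ P₁ a Y).toReal := by
  have hsplit : ∫ ω, μ.real (Y \ a ω ⁻¹' Y) ∂P =
      κ * ∫ ω, μ.real (Y \ a ω ⁻¹' Y) ∂P₁ + (1 - κ) * ∫ ω, μ.real (Y \ a ω ⁻¹' Y) ∂P₂ := by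
    rw [hdec]
    exact integral_ofReal_smul_add_ofReal_one_sub_smul hκ
      (integrable_measureReal_diff_preimage hj hY) (integrable_measureReal_diff_preimage hj hY)
  have hP₂ : ∫ ω, μ.real (Y \ a ω ⁻¹' Y) ∂P₂ ≤ μ.real Y := by
    calc ∫ ω, μ.real (Y \ a ω ⁻¹' Y) ∂P₂ ≤ ∫ _, μ.real Y ∂P₂ :=
          integral_mono (integrable_measureReal_diff_preimage hj hY) (integrable_const _)
            fun _ => measureReal_mono Set.sdiff_subset
      _ = μ.real Y := by simp
  rw [expBoundary_toReal_eq_integral P₁ ha hj hY]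
  linear_combination one_sub_rhoPlus_mul_le_integral_measureReal_diff (P := P) ha hj hY +
    mul_le_mul_of_nonneg_left hP₂ (sub_nonneg.2 hκ.2) + hsplit

end

theorem expansion_inequality_and_invariant_bound_general {X Ω : Type*} [MeasurableSpace X]
    [MeasurableSpace Ω] (μ : Measure X) (P P₁ P₂ : Measure Ω) (a : Ω → X ≃ᵐ X)
    [IsProbabilityMeasure μ] [IsProbabilityMeasure P]
    [IsProbabilityMeasure P₁] [IsProbabilityMeasure P₂]
    (ha : ∀ ω, MeasurePreserving (a ω) μ μ)
    (hj : Measurable fun p : Ω × X => (a p.1) p.2)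
    (κ : ℝ)
    (hρ : rhoPlus μ P a < κ)
    (hdec : P = ENNReal.ofReal κ • P₁ + ENNReal.ofReal (1 - κ) • P₂) :
    (∀ Y : Set X, MeasurableSet Y → 0 < μ Y → μ Y < 1 →
      (κ - rhoPlus μ P a) / κ - (μ Y).toReal * ((1 - rhoPlus μ P a) / κ) ≤
        (expBoundary μ P₁ a Y).toReal / (μ Y).toReal) ∧
    (∀ Y : Set X, MeasurableSet Y → 0 < μ Y → expBoundary μ P₁ a Y = 0 →
      ENNReal.ofReal ((κ - rhoPlus μ P a) / (1 - rhoPlus μ P a)) ≤ μ Y) := by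
  have hκ : κ ∈ Set.Icc 0 1 :=
    mem_Icc_of_ofReal_add_ofReal_one_sub_eq_one (by simpa using congrArg (· Set.univ) hdec.symm)
  have hexp := fun Y (hY : MeasurableSet Y) =>
    measureReal_mul_sub_le_mul_expBoundary ha hj hκ hdec hY
  refine ⟨fun Y hY hy₀ _ => ?_, fun Y hY hy₀ he => ?_⟩
  · have hy : 0 < μ.real Y := ENNReal.toReal_pos hy₀.ne' (measure_ne_top μ Y)
    rcases hκ.1.eq_or_lt with rfl | hκ₀
    -- for `κ = 0` the left side is `0` by the convention `x / 0 = 0`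
    · simp only [div_zero, mul_zero, sub_zero]
      positivity
    · calc (κ - rhoPlus μ P a) / κ - μ.real Y * ((1 - rhoPlus μ P a) / κ)
          = (μ.real Y * (κ - rhoPlus μ P a) - μ.real Y ^ 2 * (1 - rhoPlus μ P a)) / κ /
              μ.real Y := by field_simp
        _ ≤ κ * (expBoundary μ P₁ a Y).toReal / κ / μ.real Y := by gcongr; exact hexp Y hY
        _ = (expBoundary μ P₁ a Y).toReal / μ.real Y := by field_simp
  · have hy : 0 < μ.real Y := ENNReal.toReal_pos hy₀.ne' (measure_ne_top μ Y)
    have h := hexp Y hY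
    rw [he, ENNReal.toReal_zero, mul_zero] at h
    refine ENNReal.ofReal_le_of_le_toReal ?_
    rw [← measureReal_def, div_le_iff₀ (sub_pos.2 (hρ.trans_le hκ.2))]
    nlinarith

theorem expansion_inequality_and_invariant_bound {X Ω : Type*} [MeasurableSpace X]
    [MeasurableSpace Ω] (μ : Measure X) (P P₁ P₂ : Measure Ω) (a : Ω → X ≃ᵐ X)
    [IsProbabilityMeasure μ] [IsProbabilityMeasure P]
    [IsProbabilityMeasure P₁] [IsProbabilityMeasure P₂]
    (ha : ∀ ω, MeasurePreserving (a ω) μ μ)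
    (hj : Measurable fun p : Ω × X => (a p.1) p.2)
    (κ : ℝ) (hκ1 : κ ≤ 1)
    (hρ : rhoPlus μ P a < κ)
    (hdec : P = ENNReal.ofReal κ • P₁ + ENNReal.ofReal (1 - κ) • P₂) :
    (∀ Y : Set X, MeasurableSet Y → 0 < μ Y → μ Y < 1 →
      (κ - rhoPlus μ P a) / κ - (μ Y).toReal * ((1 - rhoPlus μ P a) / κ) ≤
        (expBoundary μ P₁ a Y).toReal / (μ Y).toReal) ∧
    (∀ Y : Set X, MeasurableSet Y → 0 < μ Y → expBoundary μ P₁ a Y = 0 →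
      ENNReal.ofReal ((κ - rhoPlus μ P a) / (1 - rhoPlus μ P a)) ≤ μ Y) :=
  expansion_inequality_and_invariant_bound_general μ P P₁ P₂ a ha hj κ hρ hdec
end
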